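/- Let m ≥ 2 have prime factorization m = p_1^{k_1}···p_h^{k_h}. A Laurent polynomial F(X) = Σ_{i=l}^r λ_i X^i over Z_m is a unit in the Laurent polynomial ring over Z_m if and only if for each prime factor p_s of m there exists exactly one index j (depending on s) with gcd(λ_j, p_s) = 1 and p_s dividing λ_i for all i ≠ j. -/

import Mathlib

/-!
Reducing modulo a prime `p ∣ m` sends `F` to a Laurent polynomial over the field `ZMod p`,
whose units are exactly the monomials `a T^n` with `a ≠ 0`; so the coefficient condition at `p`
says precisely that `F` becomes a unit modulo `p`. It remains to see that `F` is a unit as soon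
as it is one modulo every `p ∣ m`. Choose `G_p` with `F G_p ≡ 1 (mod p)`; then
`∏_p (1 - F G_p)` vanishes modulo every `p ∣ m`, hence is nilpotent because `m` divides a power
of `∏_p p`, while it is `≡ 1` modulo `F`. So `F` divides `1 -` a nilpotent, which is a unit.
-/

open LaurentPolynomial

theorem isUnit_of_forall_isUnit_map {A ι : Type*} [CommRing A] [Fintype ι] {B : ι → Type*}
    [∀ i, CommRing (B i)] (φ : ∀ i, A →+* B i) (hsurj : ∀ i, Function.Surjective (φ i))
    (hnil : ∀ a, (∀ i, φ i a = 0) → IsNilpotent a) {x : A} (hx : ∀ i, IsUnit (φ i x)) :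
    IsUnit x := by
  have hinv (i : ι) : ∃ y, φ i (1 - x * y) = 0 := by
    obtain ⟨y, hy⟩ := hsurj i ↑(hx i).unit⁻¹
    exact ⟨y, by rw [map_sub, map_one, map_mul, hy, IsUnit.mul_val_inv, sub_self]⟩
  choose y hy using hinv
  set e := ∏ i, (1 - x * y i)
  have he : IsNilpotent e :=
    hnil e fun i => by rw [map_prod]; exact Finset.prod_eq_zero (Finset.mem_univ i) (hy i)
  obtain ⟨z, hz⟩ : ∃ z, z * x = 1 - e := by
    rw [← Ideal.mem_span_singleton', ← Ideal.Quotient.eq_zero_iff_mem]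
    simp [e, Ideal.Quotient.eq_zero_iff_mem.2 (Ideal.mem_span_singleton_self x)]
  exact isUnit_of_mul_isUnit_right (hz ▸ he.isUnit_one_sub)

theorem AddMonoidAlgebra.isNilpotent_of_forall_isNilpotent_coeff {R M : Type*} [CommSemiring R]
    [AddCommMonoid M] {f : AddMonoidAlgebra R M} (h : ∀ k, IsNilpotent (f.coeff k)) :
    IsNilpotent f := by
  rw [← f.sum_coeff_single]
  refine isNilpotent_sum fun k _ => ?_
  obtain ⟨n, hn⟩ := h k
  exact ⟨n, by rw [AddMonoidAlgebra.single_pow, hn, AddMonoidAlgebra.single_zero]⟩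

theorem ZMod.isNilpotent_of_forall_castHom_eq_zero {m : ℕ} [NeZero m] {a : ZMod m}
    (h : ∀ p (hp : p ∈ m.primeFactors),
      ZMod.castHom (Nat.dvd_of_mem_primeFactors hp) (ZMod p) a = 0) :
    IsNilpotent a := by
  rcases eq_or_ne a 0 with rfl | ha
  · exact IsNilpotent.zero
  have hval : a.val ≠ 0 := (ZMod.val_ne_zero a).2 ha
  have hsub : m.primeFactors ⊆ a.val.primeFactors := fun p hp => by
    have hpa := h p hp
    rw [← ZMod.natCast_zmod_val a, map_natCast, ZMod.natCast_eq_zero_iff] at hpa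
    exact Nat.mem_primeFactors.2 ⟨Nat.prime_of_mem_primeFactors hp, hpa, hval⟩
  refine ⟨m, ?_⟩
  rw [← ZMod.natCast_zmod_val a, ← Nat.cast_pow, ZMod.natCast_eq_zero_iff]
  exact (Nat.dvd_pow_self_iff (NeZero.ne m) hval).2 hsub

namespace LaurentPolynomial

theorem exists_C_mul_T_of_isUnit {R : Type*} [CommRing R] [IsDomain R] {F : R[T;T⁻¹]}
    (h : IsUnit F) : ∃ (a : R) (n : ℤ), IsUnit a ∧ F = C a * T n := by
  obtain ⟨u, rfl⟩ := h
  obtain ⟨n, f, hf⟩ := exists_T_pow (u : R[T;T⁻¹])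
  obtain ⟨n', g, hg⟩ := exists_T_pow (↑u⁻¹ : R[T;T⁻¹])
  have hfg : f * g = Polynomial.X ^ (n + n') := by
    apply Polynomial.toLaurent_injective
    rw [map_mul, hf, hg, Polynomial.toLaurent_X_pow, mul_mul_mul_comm, Units.mul_inv, one_mul,
      ← T_add]
    norm_cast
  -- `X` is prime, so the divisor `f` of `X ^ (n + n')` is a unit times a power of `X`.
  obtain ⟨d, -, v, hv⟩ := (dvd_prime_pow Polynomial.prime_X _).1 (Dvd.intro g hfg)
  obtain ⟨a, ha, hCa⟩ := Polynomial.isUnit_iff.1 (v⁻¹).isUnit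
  refine ⟨a, d - n, ha, ?_⟩
  rw [← Units.eq_mul_inv_iff_mul_eq, ← hCa] at hv
  have hu : (u : R[T;T⁻¹]) = Polynomial.toLaurent f * T (-n) := by
    rw [hf, mul_T_assoc, add_neg_cancel, T_zero, mul_one]
  rw [hu, hv, map_mul, Polynomial.toLaurent_X_pow, Polynomial.toLaurent_C, mul_comm (T _),
    mul_T_assoc, sub_eq_add_neg]

theorem coeff_sum_C_mul_T {R : Type*} [Semiring R] (s : Finset ℤ) (c : ℤ → R) (k : ℤ) :
    (∑ i ∈ s, C (c i) * T i).coeff k = if k ∈ s then c k else 0 := by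
  simp [← single_eq_C_mul_T, AddMonoidAlgebra.coeff_single, Finsupp.single_apply]


theorem isUnit_sum_C_mul_T_iff {R : Type*} [CommRing R] [IsDomain R] (s : Finset ℤ)
    (c : ℤ → R) :
    IsUnit (∑ i ∈ s, C (c i) * T i) ↔
      ∃! j, j ∈ s ∧ IsUnit (c j) ∧ ∀ i ∈ s, i ≠ j → c i = 0 := by
  constructor
  · intro h
    obtain ⟨a, n, ha, hF⟩ := exists_C_mul_T_of_isUnit h
    have hcoeff (k : ℤ) : (if k ∈ s then c k else 0) = if n = k then a else 0 := by
      rw [← coeff_sum_C_mul_T, hF, ← single_eq_C_mul_T, AddMonoidAlgebra.coeff_single,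
        Finsupp.single_apply]
    have hn : n ∈ s := by
      by_contra hn
      exact ha.ne_zero (by simpa [hn] using (hcoeff n).symm)
    have hzero : ∀ i ∈ s, i ≠ n → c i = 0 := fun i hi hin => by
      simpa [hi, Ne.symm hin] using hcoeff i
    have hcn : c n = a := by simpa [hn] using hcoeff n
    refine ⟨n, ⟨hn, hcn ▸ ha, hzero⟩, ?_⟩
    rintro j ⟨hj, hu, -⟩
    by_contra hjn
    exact not_isUnit_zero (hzero j hj hjn ▸ hu)
  · rintro ⟨j, ⟨hj, hu, hzero⟩, -⟩
    rw [Finset.sum_eq_single_of_mem j hj fun i hi hij => by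
      rw [hzero i hi hij, map_zero, zero_mul]]
    exact (hu.map C).mul (isUnit_T j)

theorem mapRingHom_sum_C_mul_T {R S : Type*} [Semiring R] [Semiring S] (f : R →+* S)
    (s : Finset ℤ) (c : ℤ → R) :
    AddMonoidAlgebra.mapRingHom ℤ f (∑ i ∈ s, C (c i) * T i) =
      ∑ i ∈ s, C (f (c i)) * T i := by
  simp [← single_eq_C_mul_T]

theorem isUnit_iff_forall_isUnit_mapRingHom_castHom {m : ℕ} [NeZero m] {F : (ZMod m)[T;T⁻¹]} :
    IsUnit F ↔ ∀ p (hp : p ∈ m.primeFactors),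
      IsUnit (AddMonoidAlgebra.mapRingHom ℤ
        (ZMod.castHom (Nat.dvd_of_mem_primeFactors hp) (ZMod p)) F) := by
  refine ⟨fun h p hp => h.map _, fun h => ?_⟩
  refine isUnit_of_forall_isUnit_map
    (fun p : m.primeFactors => AddMonoidAlgebra.mapRingHom ℤ
      (ZMod.castHom (Nat.dvd_of_mem_primeFactors p.2) (ZMod p)))
    (fun p => AddMonoidAlgebra.map_surjective _
      (ZMod.castHom_surjective (Nat.dvd_of_mem_primeFactors p.2)))
    (fun G hG => AddMonoidAlgebra.isNilpotent_of_forall_isNilpotent_coeff fun k =>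
      ZMod.isNilpotent_of_forall_castHom_eq_zero fun p hp => ?_)
    fun p => h p p.2
  simpa using congr(($(hG ⟨p, hp⟩)).coeff k)

end LaurentPolynomial

theorem laurent_unit_iff_prime_factors_general (m : ℕ) (hm : 2 ≤ m)
    (l r : ℤ) (lam : ℤ → ZMod m)
    (F : LaurentPolynomial (ZMod m))
    (hF : F = ∑ i ∈ Finset.Icc l r, LaurentPolynomial.C (lam i) * T i) :
    IsUnit F ↔
      ∀ p, ∀ hp : p ∈ m.primeFactors,
        ∃! j : ℤ, j ∈ Finset.Icc l r ∧
          IsUnit (ZMod.castHom (Nat.dvd_of_mem_primeFactors hp) (ZMod p) (lam j)) ∧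
          ∀ i ∈ Finset.Icc l r, i ≠ j →
            ZMod.castHom (Nat.dvd_of_mem_primeFactors hp) (ZMod p) (lam i) = 0 := by
  have : NeZero m := ⟨by omega⟩
  subst hF
  rw [isUnit_iff_forall_isUnit_mapRingHom_castHom]
  refine forall₂_congr fun p hp => ?_
  have : Fact p.Prime := ⟨Nat.prime_of_mem_primeFactors hp⟩
  rw [mapRingHom_sum_C_mul_T, isUnit_sum_C_mul_T_iff]

/-- A Laurent polynomial `F = Σ_{i=l}^r λ_i X^i` over `Z_m` is a unit iff for each prime
factor `p` of `m` there is exactly one index `j ∈ [l, r]` whose coefficient is coprime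
to `p` (its image in `ZMod p` is a unit), all other coefficients being divisible by `p`. -/
theorem laurent_unit_iff_prime_factors (m : ℕ) (hm : 2 ≤ m)
    (l r : ℤ) (hlr : l ≤ r) (lam : ℤ → ZMod m)
    (F : LaurentPolynomial (ZMod m))
    (hF : F = ∑ i ∈ Finset.Icc l r, LaurentPolynomial.C (lam i) * T i) :
    IsUnit F ↔
      ∀ p, ∀ hp : p ∈ m.primeFactors,
        ∃! j : ℤ, j ∈ Finset.Icc l r ∧
          IsUnit (ZMod.castHom (Nat.dvd_of_mem_primeFactors hp) (ZMod p) (lam j)) ∧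
          ∀ i ∈ Finset.Icc l r, i ≠ j →
            ZMod.castHom (Nat.dvd_of_mem_primeFactors hp) (ZMod p) (lam i) = 0 :=
  laurent_unit_iff_prime_factors_general m hm l r lam F hF
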